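/- Let D = (𝒱, 𝒜) be a recursive linearization of a hypergraph G = (V, E), and let G' := (V, E') be the hypergraph with edge set E' := 𝒱 \ S. Then flowerRel(G') ⊆ P(D), i.e., every inequality defining the relaxation P(D) is implied by the extended flower relaxation of G'. -/
import Mathlib


open Finset

/-- A set `I` is a singleton `{v}`. -/
def IsSingleton {V : Type} (I : Finset V) : Prop := ∃ v : V, I = {v}

instance {V : Type} [DecidableEq V] [Fintype V] (I : Finset V) :
    Decidable (IsSingleton I) :=
  inferInstanceAs (Decidable (∃ v : V, I = {v}))

/-- The successors of node `I` in the arc set `A`. -/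
def succOf {V : Type} [DecidableEq V] (A : Finset (Finset V × Finset V))
    (I : Finset V) : Finset (Finset V) :=
  (A.filter fun a => a.1 = I).image Prod.snd

/-- A recursive linearization over the finite ground set `V`: a simple digraph whose
nodes are nonempty subsets of `V` including all singletons, where each arc goes from a
set to a subset, and the successors of every non-singleton node cover it. -/
structure RecLin (V : Type) [Fintype V] [DecidableEq V] where
  nodes : Finset (Finset V)
  arcs : Finset (Finset V × Finset V)
  arcs_fst_mem : ∀ a ∈ arcs, a.1 ∈ nodes
  arcs_snd_mem : ∀ a ∈ arcs, a.2 ∈ nodes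
  no_loops : ∀ a ∈ arcs, a.1 ≠ a.2
  singleton_mem : ∀ v : V, ({v} : Finset V) ∈ nodes
  nodes_nonempty : ∀ I ∈ nodes, I.Nonempty
  arcs_subset : ∀ a ∈ arcs, a.2 ⊆ a.1
  succ_union : ∀ I ∈ nodes, ¬ IsSingleton I → (succOf arcs I).biUnion id = I

/-- The relaxation `P(D)` of a recursive linearization, as a subset of `ℝ^{Finset V}`
constraining only the coordinates indexed by nodes of `D`. -/
def relax {V : Type} [Fintype V] [DecidableEq V] (D : RecLin V) :
    Set (Finset V → ℝ) :=
  { z | (∀ I ∈ D.nodes, 0 ≤ z I ∧ z I ≤ 1)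
      ∧ (∀ a ∈ D.arcs, z a.1 ≤ z a.2)
      ∧ (∀ I ∈ D.nodes, ¬ IsSingleton I →
          z I + ∑ J ∈ succOf D.arcs I, (1 - z J) ≥ 1) }

/-- The projected relaxation `P_T(D)`: the orthogonal projection of `P(D)` onto the
coordinates indexed by `T ∪ S` (`S` = singletons). -/
def projRelax {V : Type} [Fintype V] [DecidableEq V] (D : RecLin V)
    (T : Finset (Finset V)) : Set (Finset V → ℝ) :=
  { z | ∃ w ∈ relax D, ∀ I : Finset V, (I ∈ T ∨ IsSingleton I) → w I = z I }

/-- `D` is a recursive linearization of the hypergraph `G = (V, E)`. -/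
def RecLinOf {V : Type} [Fintype V] [DecidableEq V] (D : RecLin V)
    (E : Finset (Finset V)) : Prop :=
  E ⊆ D.nodes ∧ ∀ I ∈ D.nodes, (∀ a ∈ D.arcs, a.2 ≠ I) → (I ∈ E ∨ IsSingleton I)

/-- `D` is partitioning: the successors of every node are pairwise disjoint. -/
def Partitioning {V : Type} [Fintype V] [DecidableEq V] (D : RecLin V) : Prop :=
  ∀ I ∈ D.nodes, ∀ J ∈ succOf D.arcs I, ∀ J' ∈ succOf D.arcs I, J ≠ J' → J ∩ J' = ∅

/-- `D` is binary: every non-singleton node has exactly two successors. -/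
def Binary {V : Type} [Fintype V] [DecidableEq V] (D : RecLin V) : Prop :=
  ∀ I ∈ D.nodes, ¬ IsSingleton I → (succOf D.arcs I).card = 2

/-- A recursive McCormick linearization is partitioning and binary. -/
def McCormick {V : Type} [Fintype V] [DecidableEq V] (D : RecLin V) : Prop :=
  Partitioning D ∧ Binary D

/-- The extended flower relaxation of the hypergraph `G = (V, E)`, as a subset of
`ℝ^{Finset V}` constraining only the coordinates indexed by `E ∪ S`. -/
def flowerRel {V : Type} [Fintype V] [DecidableEq V] (E : Finset (Finset V)) :
    Set (Finset V → ℝ) :=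
  { z | (∀ I : Finset V, (I ∈ E ∨ IsSingleton I) → 0 ≤ z I ∧ z I ≤ 1)
      ∧ (∀ I ∈ E, ∀ v ∈ I, z I ≤ z {v})
      ∧ (∀ I ∈ E, ∀ k : ℕ, ∀ J : Fin k → Finset V,
          (∀ i, J i ∈ E ∨ IsSingleton (J i)) →
          I ⊆ Finset.univ.biUnion J →
          (∀ i, (J i ∩ I).Nonempty) →
          z I + ∑ i, (1 - z (J i)) ≥ 1) }

/-- The multilinear polytope `ML(G)`: the convex hull of the 0/1 points whose
`E`-coordinates are the products of the corresponding singleton coordinates. -/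
def ML {V : Type} [Fintype V] [DecidableEq V] (E : Finset (Finset V)) :
    Set (Finset V → ℝ) :=
  convexHull ℝ { z : Finset V → ℝ |
    (∀ I : Finset V, (I ∈ E ∨ IsSingleton I) → z I = 0 ∨ z I = 1)
    ∧ ∀ I ∈ E, z I = ∏ v ∈ I, z {v} }


lemma mem_succOf {V : Type} [DecidableEq V] {A : Finset (Finset V × Finset V)}
    {I J : Finset V} : J ∈ succOf A I ↔ (I, J) ∈ A := by
  constructor
  · intro h
    simp only [succOf, Finset.mem_image, Finset.mem_filter] at h
    obtain ⟨a, ⟨ha, h1⟩, h2⟩ := h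
    have : a = (I, J) := by
      cases a; simp_all
    rwa [this] at ha
  · intro h
    simp only [succOf, Finset.mem_image, Finset.mem_filter]
    exact ⟨(I, J), ⟨h, rfl⟩, rfl⟩

/-- for a recursive linearization `D` of `G = (V, E)` and the hypergraph
`G' = (V, E')` with `E' = 𝒱 \ S`, every inequality of `P(D)` is implied by the
extended flower relaxation of `G'`: `flowerRel(G') ⊆ P(D)`. -/
theorem flowerRel_nodes_subset_relax {V : Type} [Fintype V] [DecidableEq V]
    (E : Finset (Finset V)) (hE : ∀ I ∈ E, 2 ≤ I.card)
    (D : RecLin V) (hD : RecLinOf D E) :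
    flowerRel (D.nodes.filter fun I => ¬ IsSingleton I) ⊆ relax D := by

  intro z hz
  obtain ⟨hb, hv, hf⟩ := hz
  set E' := D.nodes.filter fun I => ¬ IsSingleton I with hE'
  have memE' : ∀ I ∈ D.nodes, I ∈ E' ∨ IsSingleton I := by
    intro I hI
    by_cases h : IsSingleton I
    · exact Or.inr h
    · exact Or.inl (Finset.mem_filter.2 ⟨hI, h⟩)
  refine ⟨fun I hI => hb I (memE' I hI), ?_, ?_⟩
  · -- arc inequalities
    intro a ha
    have hsub : a.2 ⊆ a.1 := D.arcs_subset a ha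
    have hne2 : a.2.Nonempty := D.nodes_nonempty a.2 (D.arcs_snd_mem a ha)
    have h1ns : ¬ IsSingleton a.1 := by
      rintro ⟨v, hv1⟩
      have : a.2 = a.1 := by
        rw [hv1] at hsub ⊢
        exact Finset.eq_singleton_iff_nonempty_unique_mem.2
          ⟨hne2, fun x hx => Finset.mem_singleton.1 (hsub hx)⟩
      exact D.no_loops a ha this.symm
    have h1E' : a.1 ∈ E' := Finset.mem_filter.2 ⟨D.arcs_fst_mem a ha, h1ns⟩
    by_cases h2 : IsSingleton a.2
    · obtain ⟨v, hv2⟩ := h2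
      have hvmem : v ∈ a.1 := hsub (by rw [hv2]; exact Finset.mem_singleton_self v)
      have := hv a.1 h1E' v hvmem
      rwa [hv2]
    · have h2E' : a.2 ∈ E' := Finset.mem_filter.2 ⟨D.arcs_snd_mem a ha, h2⟩
      have := hf a.2 h2E' 1 (fun _ => a.1) (fun _ => Or.inl h1E')
        (by
          intro v hv'
          exact Finset.mem_biUnion.2 ⟨0, Finset.mem_univ _, hsub hv'⟩)
        (fun _ => by
          rwa [Finset.inter_eq_right.2 hsub])
      simp only [Fin.sum_univ_one] at this
      linarith
  · -- flower inequalities at each non-singleton node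
    intro I hI hns
    set s := succOf D.arcs I with hs
    have hsnodes : ∀ J ∈ s, J ∈ D.nodes := fun J hJ =>
      D.arcs_snd_mem (I, J) (mem_succOf.1 hJ)
    have hssub : ∀ J ∈ s, J ⊆ I := fun J hJ =>
      D.arcs_subset (I, J) (mem_succOf.1 hJ)
    have hcover : s.biUnion id = I := D.succ_union I hI hns
    set k := s.card with hk
    let e : {x // x ∈ s} ≃ Fin k := s.equivFin
    let J : Fin k → Finset V := fun i => (e.symm i : Finset V)
    have hJmem : ∀ i, J i ∈ s := fun i => (e.symm i).2
    have key := hf I (Finset.mem_filter.2 ⟨hI, hns⟩) k J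
      (fun i => memE' (J i) (hsnodes _ (hJmem i)))
      (by
        intro v hv'
        have : v ∈ s.biUnion id := hcover ▸ hv'
        obtain ⟨J', hJ', hvJ'⟩ := Finset.mem_biUnion.1 this
        refine Finset.mem_biUnion.2 ⟨e ⟨J', hJ'⟩, Finset.mem_univ _, ?_⟩
        show v ∈ J (e ⟨J', hJ'⟩)
        simp only [J, Equiv.symm_apply_apply]
        exact hvJ')
      (fun i => by
        have hne : (J i).Nonempty := D.nodes_nonempty _ (hsnodes _ (hJmem i))
        rwa [Finset.inter_eq_left.2 (hssub _ (hJmem i))])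
    have hsum : ∑ i, (1 - z (J i)) = ∑ J' ∈ s, (1 - z J') := by
      rw [← Finset.sum_coe_sort s (fun J' => 1 - z J')]
      exact (Equiv.sum_comp e.symm (fun x : {x // x ∈ s} => 1 - z (x : Finset V)))
    rw [hsum] at key
    exact key
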